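/- (Theorem 2.3: explicit form of the Todd generating function of intersections of theta divisors.) For all real numbers b and t, the formal power series G(X) = ∑_{n≥0} ( ∑_{k=0}^{n} (−1)^{n−k} · Surj(n+1,k+1) · b^{n−k} t^{k} ) · X^{n+1}/(n+1)! satisfies, in the ring of formal power series over ℝ, the identity G(X) · ( b − t·(1 − e^{−bX}) ) = 1 − e^{−bX}. -/

import Mathlib

/-- Number of surjections from an `m`-element set onto a `j`-element set. -/
def Surj (m j : ℕ) : ℕ :=
  Fintype.card {f : Fin m → Fin j // Function.Surjective f}

/-- The formal power series `e^{cX} = ∑ c^m X^m / m!` over `ℝ`. -/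
noncomputable def expc (c : ℝ) : PowerSeries ℝ :=
  PowerSeries.rescale c (PowerSeries.exp ℝ)

lemma surj_of_lt {m j : ℕ} (h : m < j) : Surj m j = 0 := by
  rw [Surj, Fintype.card_eq_zero_iff]
  exact ⟨fun ⟨f, hf⟩ => absurd (Fintype.card_le_of_surjective f hf) (by simpa using h.not_ge)⟩

lemma surj_zero_zero : Surj 0 0 = 1 := by
  rw [Surj, Fintype.card_eq_one_iff]
  refine ⟨⟨fun x => x.elim0, fun y => y.elim0⟩, ?_⟩
  rintro ⟨f, hf⟩
  exact Subtype.ext (funext fun x => x.elim0)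

lemma surj_succ_zero (m : ℕ) : Surj (m + 1) 0 = 0 := by
  rw [Surj, Fintype.card_eq_zero_iff]
  exact ⟨fun ⟨f, _⟩ => (f 0).elim0⟩

open Finset in
lemma card_fiber_image (m j : ℕ) (s : Finset (Fin j)) :
    (Finset.univ.filter fun f : Fin m → Fin j => Finset.univ.image f = s).card
      = Surj m s.card := by
  classical
  rw [Surj, Fintype.card_subtype]
  set e : ↥s ≃ Fin s.card := Fintype.equivFinOfCardEq (Fintype.card_coe s) with he
  refine Finset.card_bij
    (fun f hf => fun x => e ⟨f x, by
      rw [Finset.mem_filter] at hf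
      exact hf.2 ▸ Finset.mem_image_of_mem f (Finset.mem_univ x)⟩)
    ?_ ?_ ?_
  · -- maps into surjective functions
    intro f hf
    rw [Finset.mem_filter] at hf ⊢
    refine ⟨Finset.mem_univ _, fun y => ?_⟩
    have hy : ((e.symm y : ↥s) : Fin j) ∈ Finset.univ.image f := by
      rw [hf.2]; exact (e.symm y).2
    obtain ⟨x, -, hx⟩ := Finset.mem_image.mp hy
    refine ⟨x, ?_⟩
    rw [Equiv.apply_eq_iff_eq_symm_apply]
    exact Subtype.ext hx
  · -- injective
    intro f hf g hg h
    funext x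
    have := congrFun h x
    have := e.injective this
    exact congrArg Subtype.val this
  · -- surjective
    intro g hg
    rw [Finset.mem_filter] at hg
    have hgsurj := hg.2
    refine ⟨fun x => ((e.symm (g x) : ↥s) : Fin j), ?_, ?_⟩
    · rw [Finset.mem_filter]
      refine ⟨Finset.mem_univ _, Finset.Subset.antisymm ?_ ?_⟩
      · intro y hy
        obtain ⟨x, -, hx⟩ := Finset.mem_image.mp hy
        exact hx ▸ (e.symm (g x)).2
      · intro y hy
        obtain ⟨x, hx⟩ := hgsurj (e ⟨y, hy⟩)
        refine Finset.mem_image.mpr ⟨x, Finset.mem_univ x, ?_⟩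
        rw [hx, Equiv.symm_apply_apply]
    · funext x
      simp only [Equiv.apply_eq_iff_eq_symm_apply]

lemma pow_eq_sum_surj (m j : ℕ) :
    j ^ m = ∑ i ∈ Finset.range (j + 1), j.choose i * Surj m i := by
  classical
  have h1 : (Finset.univ : Finset (Fin m → Fin j)).card
      = ∑ s ∈ (Finset.univ : Finset (Finset (Fin j))),
          (Finset.univ.filter fun f : Fin m → Fin j => Finset.univ.image f = s).card :=
    Finset.card_eq_sum_card_fiberwise (fun f _ => Finset.mem_univ _)
  have h2 : (Finset.univ : Finset (Fin m → Fin j)).card = j ^ m := by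
    simp [Finset.card_univ]
  rw [h2] at h1
  have h4 := Finset.sum_powerset_apply_card (f := fun i => Surj m i)
    (x := (Finset.univ : Finset (Fin j)))
  simp only [Finset.card_univ, Fintype.card_fin, Finset.powerset_univ, smul_eq_mul] at h4
  rw [h1, Finset.sum_congr rfl fun s _ => card_fiber_image m j s, ← h4]

open PowerSeries

noncomputable def Sps (j : ℕ) : PowerSeries ℝ :=
  PowerSeries.mk fun m => (Surj m j : ℝ) / m.factorial

lemma rescale_exp_eq (j : ℕ) :
    PowerSeries.rescale (j : ℝ) (PowerSeries.exp ℝ)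
      = ∑ i ∈ Finset.range (j + 1), PowerSeries.C (j.choose i : ℝ) * Sps i := by
  ext m
  rw [PowerSeries.coeff_rescale, map_sum]
  simp only [PowerSeries.coeff_C_mul, Sps, PowerSeries.coeff_mk, PowerSeries.coeff_exp]
  have h : ((j : ℝ)) ^ m = ∑ i ∈ Finset.range (j + 1), (j.choose i : ℝ) * (Surj m i : ℝ) := by
    exact_mod_cast congrArg (Nat.cast (R := ℝ)) (pow_eq_sum_surj m j)
  have hm : ((m.factorial : ℝ)) ≠ 0 := Nat.cast_ne_zero.mpr m.factorial_ne_zero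
  have halg : (algebraMap ℚ ℝ) (1 / (m.factorial : ℚ)) = 1 / (m.factorial : ℝ) := by
    simp
  rw [halg]
  simp_rw [div_eq_mul_inv, ← mul_assoc, ← Finset.sum_mul]
  rw [← h]
  ring

lemma Sps_eq (j : ℕ) : Sps j = (PowerSeries.exp ℝ - 1) ^ j := by
  induction j using Nat.strong_induction_on with
  | _ j ih =>
    have hbin : (PowerSeries.exp ℝ) ^ j
        = ∑ i ∈ Finset.range (j + 1),
            PowerSeries.C (j.choose i : ℝ) * (PowerSeries.exp ℝ - 1) ^ i := by
      conv_lhs => rw [show PowerSeries.exp ℝ = (PowerSeries.exp ℝ - 1) + 1 by ring]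
      rw [add_pow]
      refine Finset.sum_congr rfl fun i hi => ?_
      rw [one_pow, map_natCast (PowerSeries.C (R := ℝ))]
      push_cast
      ring
    have h : ∑ i ∈ Finset.range (j + 1), PowerSeries.C (j.choose i : ℝ) * Sps i
        = ∑ i ∈ Finset.range (j + 1),
            PowerSeries.C (j.choose i : ℝ) * (PowerSeries.exp ℝ - 1) ^ i := by
      rw [← rescale_exp_eq j, ← PowerSeries.exp_pow_eq_rescale_exp, hbin]
    have hsum : ∑ i ∈ Finset.range j, PowerSeries.C (j.choose i : ℝ) * Sps i
        = ∑ i ∈ Finset.range j, PowerSeries.C (j.choose i : ℝ) * (PowerSeries.exp ℝ - 1) ^ i :=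
      Finset.sum_congr rfl fun i hi => by rw [ih i (Finset.mem_range.mp hi)]
    rw [Finset.sum_range_succ, Finset.sum_range_succ, hsum] at h
    have h2 := add_left_cancel h
    simpa using h2

noncomputable def Hps (b : ℝ) (j : ℕ) : PowerSeries ℝ :=
  PowerSeries.mk fun m => (Surj m j : ℝ) * (-1) ^ (m - j) * b ^ (m - j) / m.factorial

lemma Hps_coeff_zero {b : ℝ} {d N : ℕ} (h : d < N) : PowerSeries.coeff d (Hps b N) = 0 := by
  simp [Hps, surj_of_lt h]

lemma Hps_zero (b : ℝ) : Hps b 0 = 1 := by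
  ext m
  cases m with
  | zero => simp [Hps, surj_zero_zero]
  | succ m => simp [Hps, surj_succ_zero, PowerSeries.coeff_one]

lemma key1 (b : ℝ) (j : ℕ) :
    (PowerSeries.C b) ^ j * Hps b j = (1 - expc (-b)) ^ j := by
  have h1 : (1 - expc (-b)) ^ j
      = (PowerSeries.C (-1)) ^ j * PowerSeries.rescale (-b) ((PowerSeries.exp ℝ - 1) ^ j) := by
    rw [map_pow, map_sub, map_one, ← mul_pow]
    congr 1
    rw [expc]
    simp only [map_neg, map_one]
    ring
  rw [h1, ← Sps_eq, ← map_pow, ← map_pow]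
  ext m
  rw [PowerSeries.coeff_C_mul, PowerSeries.coeff_C_mul, PowerSeries.coeff_rescale]
  simp only [Hps, Sps, PowerSeries.coeff_mk]
  rcases le_or_gt j m with h | h
  · obtain ⟨d, rfl⟩ : ∃ d, m = d + j := ⟨m - j, (Nat.sub_add_cancel h).symm⟩
    rw [Nat.add_sub_cancel]
    rw [neg_pow b, neg_pow (1 : ℝ)]
    ring_nf
    rw [show ((-1:ℝ)) ^ (j * 2) = 1 from by rw [mul_comm, pow_mul]; norm_num, mul_one]
  · simp [surj_of_lt h]

lemma key2 (b : ℝ) (j : ℕ) :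
    PowerSeries.C b * Hps b (j + 1) = (1 - expc (-b)) * Hps b j := by
  by_cases hb : b = 0
  · subst hb
    have hE : expc (-(0:ℝ)) = 1 := by
      rw [neg_zero, expc, PowerSeries.rescale_zero]
      simp
    rw [hE]
    simp
  · have hCb : PowerSeries.C b ≠ 0 := fun h =>
      hb (by simpa using congrArg (PowerSeries.constantCoeff) h)
    apply mul_left_cancel₀ (pow_ne_zero j hCb)
    calc (PowerSeries.C b) ^ j * (PowerSeries.C b * Hps b (j + 1))
        = (PowerSeries.C b) ^ (j + 1) * Hps b (j + 1) := by ring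
      _ = (1 - expc (-b)) ^ (j + 1) := key1 b (j + 1)
      _ = (1 - expc (-b)) * ((PowerSeries.C b) ^ j * Hps b j) := by rw [key1]; ring
      _ = (PowerSeries.C b) ^ j * ((1 - expc (-b)) * Hps b j) := by ring

/-- The Todd generating function of intersections of theta divisors:
`G(X) = ∑_{n≥0} (∑_{k=0}^n Td(Θ_k^{n-k}) b^{n-k} t^k) X^{n+1}/(n+1)!`, where
`Td(Θ_k^{n-k}) = (-1)^{n-k}·Surj(n+1,k+1)`, satisfies
`G(X)·(b - t·(1 - e^{-bX}))= 1 - e^{-bX}`. -/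
theorem todd_genus_theta_egf (b t : ℝ) :
    (PowerSeries.mk (fun m => match m with
      | 0 => 0
      | n + 1 =>
          (∑ k ∈ Finset.range (n + 1),
            (-1 : ℝ) ^ (n - k) * (Surj (n + 1) (k + 1) : ℝ) * b ^ (n - k) * t ^ k) /
            (n + 1).factorial)) *
      (PowerSeries.C b - PowerSeries.C t * (1 - expc (-b))) = 1 - expc (-b) := by
  classical
  set G : PowerSeries ℝ := PowerSeries.mk (fun m => match m with
      | 0 => 0
      | n + 1 =>
          (∑ k ∈ Finset.range (n + 1),
            (-1 : ℝ) ^ (n - k) * (Surj (n + 1) (k + 1) : ℝ) * b ^ (n - k) * t ^ k) /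
            (n + 1).factorial) with hGdef
  set D : PowerSeries ℝ := PowerSeries.C b - PowerSeries.C t * (1 - expc (-b)) with hD
  ext m
  set P : PowerSeries ℝ := ∑ j ∈ Finset.range (m + 1), (PowerSeries.C t) ^ j * Hps b (j + 1)
    with hP
  have hG : ∀ i ≤ m, PowerSeries.coeff i G = PowerSeries.coeff i P := by
    intro i hi
    have hPc : PowerSeries.coeff i P
        = ∑ j ∈ Finset.range (m + 1), t ^ j * PowerSeries.coeff i (Hps b (j + 1)) := by
      rw [hP, map_sum]
      refine Finset.sum_congr rfl fun j _ => ?_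
      rw [← map_pow, PowerSeries.coeff_C_mul]
    cases i with
    | zero =>
      rw [hPc, Finset.sum_eq_zero fun j _ => by
        rw [Hps_coeff_zero (Nat.succ_pos j), mul_zero]]
      simp [hGdef]
    | succ n =>
      rw [hPc]
      have hsub : ∀ j ∈ Finset.range (m + 1), j ∉ Finset.range (n + 1) →
          t ^ j * PowerSeries.coeff (n + 1) (Hps b (j + 1)) = 0 := by
        intro j _ hj
        rw [Finset.mem_range] at hj
        rw [Hps_coeff_zero (by omega), mul_zero]
      rw [← Finset.sum_subset (Finset.range_subset_range.mpr (by omega)) hsub]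
      rw [hGdef, PowerSeries.coeff_mk]
      show (∑ k ∈ Finset.range (n + 1),
            (-1 : ℝ) ^ (n - k) * (Surj (n + 1) (k + 1) : ℝ) * b ^ (n - k) * t ^ k) /
            (n + 1).factorial = _
      rw [Finset.sum_div]
      refine Finset.sum_congr rfl fun k hk => ?_
      simp only [Hps, PowerSeries.coeff_mk]
      rw [Nat.succ_sub_succ]
      ring
  have stepA : PowerSeries.coeff m (G * D) = PowerSeries.coeff m (P * D) := by
    rw [PowerSeries.coeff_mul, PowerSeries.coeff_mul]
    refine Finset.sum_congr rfl fun p hp => ?_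
    rw [Finset.HasAntidiagonal.mem_antidiagonal] at hp
    rw [hG p.1 (by omega)]
  have stepB : P * D = (1 - expc (-b))
      - (PowerSeries.C t) ^ (m + 1) * ((1 - expc (-b)) * Hps b (m + 1)) := by
    rw [hP, Finset.sum_mul]
    rw [Finset.sum_congr rfl (fun j (_ : j ∈ Finset.range (m+1)) =>
      show (PowerSeries.C t) ^ j * Hps b (j + 1) * D
          = (fun i => (PowerSeries.C t) ^ i * ((1 - expc (-b)) * Hps b i)) j
            - (fun i => (PowerSeries.C t) ^ i * ((1 - expc (-b)) * Hps b i)) (j + 1) from by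
        simp only []
        rw [hD]
        calc (PowerSeries.C t) ^ j * Hps b (j + 1)
              * (PowerSeries.C b - PowerSeries.C t * (1 - expc (-b)))
            = (PowerSeries.C t) ^ j * (PowerSeries.C b * Hps b (j + 1))
              - (PowerSeries.C t) ^ (j + 1) * ((1 - expc (-b)) * Hps b (j + 1)) := by
              ring
          _ = (PowerSeries.C t) ^ j * ((1 - expc (-b)) * Hps b j)
              - (PowerSeries.C t) ^ (j + 1) * ((1 - expc (-b)) * Hps b (j + 1)) := by
              rw [key2 b j])]
    rw [Finset.sum_range_sub' (fun i => (PowerSeries.C t) ^ i * ((1 - expc (-b)) * Hps b i))]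
    rw [pow_zero, one_mul, Hps_zero, mul_one]
  have stepC : PowerSeries.coeff m
      ((PowerSeries.C t) ^ (m + 1) * ((1 - expc (-b)) * Hps b (m + 1))) = 0 := by
    rw [← map_pow, PowerSeries.coeff_C_mul, PowerSeries.coeff_mul]
    rw [Finset.sum_eq_zero, mul_zero]
    intro p hp
    rw [Finset.HasAntidiagonal.mem_antidiagonal] at hp
    rw [Hps_coeff_zero (show p.2 < m + 1 by omega), mul_zero]
  rw [stepA, stepB, map_sub, stepC, sub_zero]
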